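/- Let L be a finite-dimensional simple Lie algebra over a field F in which every maximal subalgebra is nil (every element of every maximal subalgebra is ad-nilpotent). Then every element of L is ad-nilpotent, and hence by Engel's theorem L is nilpotent, contradicting simplicity; therefore no such simple Lie algebra exists. -/

import Mathlib

/-!
In a non-abelian Lie algebra the line `F x` spanned by any element is a proper subalgebra, so
in finite dimension it lies in a maximal subalgebra. If all maximal subalgebras are nil, every
`ad x` is therefore nilpotent, and Engel's theorem makes `L` nilpotent, which a simple Lie
algebra is not.
-/

/-- `M` is a maximal (proper) subalgebra of `L`. -/
def IsMaximalSubalgebra {F : Type*} [Field F] {L : Type*} [LieRing L] [LieAlgebra F L]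
    (M : LieSubalgebra F L) : Prop :=
  M ≠ ⊤ ∧ ∀ K : LieSubalgebra F L, M < K → K = ⊤

/-- `C/D` is a chief factor of `L`: `D < C` are ideals of `L` and there is no ideal of `L`
strictly between them (equivalently, `C/D` is a minimal nonzero ideal of `L/D`). -/
def IsChiefFactor {F : Type*} [Field F] {L : Type*} [LieRing L] [LieAlgebra F L]
    (D C : LieIdeal F L) : Prop :=
  D < C ∧ ∀ K : LieIdeal F L, D ≤ K → K ≤ C → K = D ∨ K = C

/-- The subquotient `S/(S ∩ D)`, as a Lie algebra; when `D ⊆ S` this is `S/D`. -/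
abbrev SubQuot {F : Type*} [Field F] {L : Type*} [LieRing L] [LieAlgebra F L]
    (S : LieSubalgebra F L) (D : LieIdeal F L) :=
  S ⧸ LieIdeal.comap S.incl D

/-- The core `M_L` of a subalgebra `M`: the largest ideal of `L` contained in `M`. -/
def coreOf {F : Type*} [Field F] {L : Type*} [LieRing L] [LieAlgebra F L]
    (M : LieSubalgebra F L) : LieIdeal F L :=
  sSup {I : LieIdeal F L | (I : Set L) ⊆ M}

theorem isMaximalSubalgebra_iff_isCoatom {F : Type*} [Field F] {L : Type*} [LieRing L]
    [LieAlgebra F L] {M : LieSubalgebra F L} : IsMaximalSubalgebra M ↔ IsCoatom M :=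
  Iff.rfl

theorem exists_isMaximalSubalgebra_le {F : Type*} [Field F] {L : Type*} [LieRing L]
    [LieAlgebra F L] [IsNoetherian F L] {K : LieSubalgebra F L} (hK : K ≠ ⊤) :
    ∃ M : LieSubalgebra F L, IsMaximalSubalgebra M ∧ K ≤ M := by
  obtain ⟨M, hM, hKM⟩ := (eq_top_or_exists_le_coatom K).resolve_left hK
  exact ⟨M, isMaximalSubalgebra_iff_isCoatom.mpr hM, hKM⟩

namespace LieSubalgebra

variable {R L : Type*} [CommRing R] [LieRing L] [LieAlgebra R L]

theorem lie_eq_zero_of_mem_lieSpan_singleton {x y z : L} (hy : y ∈ lieSpan R L {x})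
    (hz : z ∈ lieSpan R L {x}) : ⁅y, z⁆ = 0 := by
  rw [← mem_toSubmodule, coe_lieSpan_eq_span_of_forall_lie_eq_zero (by simp),
    Submodule.mem_span_singleton] at hy hz
  obtain ⟨a, rfl⟩ := hy
  obtain ⟨b, rfl⟩ := hz
  simp

theorem lieSpan_singleton_ne_top (hL : ¬IsLieAbelian L) (x : L) : lieSpan R L {x} ≠ ⊤ := by
  intro htop
  refine hL ⟨fun y z => lie_eq_zero_of_mem_lieSpan_singleton (R := R) (x := x) ?_ ?_⟩ <;>
    simp [htop]

end LieSubalgebra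

theorem exists_isMaximalSubalgebra_mem (F : Type*) [Field F] {L : Type*} [LieRing L]
    [LieAlgebra F L] [IsNoetherian F L] (hL : ¬IsLieAbelian L) (x : L) :
    ∃ M : LieSubalgebra F L, IsMaximalSubalgebra M ∧ x ∈ M := by
  obtain ⟨M, hM, hxM⟩ :=
    exists_isMaximalSubalgebra_le (LieSubalgebra.lieSpan_singleton_ne_top (R := F) hL x)
  exact ⟨M, hM, hxM (LieSubalgebra.subset_lieSpan rfl)⟩

theorem LieAlgebra.IsSimple.not_isNilpotent (R : Type*) {L : Type*} [CommRing R] [LieRing L]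
    [LieAlgebra R L] [IsSimple R L] : ¬LieRing.IsNilpotent L := by
  intro hnil
  -- `hnil` makes `L`, hence the ideal `⊤`, solvable; a simple Lie algebra has trivial radical.
  have htop : (⊤ : LieIdeal R L) = ⊥ := HasTrivialRadical.eq_bot_of_isSolvable ⊤
  refine IsSimple.non_abelian R (L := L) ⟨fun y z => ?_⟩
  have hy : y ∈ (⊥ : LieIdeal R L) := htop ▸ LieSubmodule.mem_top y
  rw [(LieSubmodule.mem_bot y).mp hy, zero_lie]

/-- There is no finite-dimensional simple Lie algebra all of whose maximal subalgebras are
nil: such an algebra would have every element ad-nilpotent, hence be nilpotent by Engel's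
theorem, contradicting simplicity. -/
theorem no_simple_with_all_maximals_nil {F : Type*} [Field F]
    {L : Type*} [LieRing L] [LieAlgebra F L] [FiniteDimensional F L]
    [LieAlgebra.IsSimple F L]
    (h : ∀ M : LieSubalgebra F L, IsMaximalSubalgebra M →
      ∀ x ∈ M, IsNilpotent (LieAlgebra.ad F L x)) :
    False := by
  have had : ∀ x : L, IsNilpotent (LieAlgebra.ad F L x) := fun x => by
    obtain ⟨M, hM, hxM⟩ :=
      exists_isMaximalSubalgebra_mem F (LieAlgebra.IsSimple.non_abelian F (L := L)) x
    exact h M hM x hxM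
  have hnil : LieRing.IsNilpotent L := (LieAlgebra.isNilpotent_iff_forall (R := F)).mpr had
  exact LieAlgebra.IsSimple.not_isNilpotent F hnil
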